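/- arXiv:2006.02325 — 2 statements merged into one kernel-verified Lean document; each statement's English description precedes it below -/
import Mathlib

section
/- Let n ≥ 2 and 2 ≤ k ≤ n. Let A and B be real symmetric n×n matrices such that A is negative semidefinite, B ∈ Γ_{k-1}, and A + B ∈ Γ_{k-1}. Then σ_k(A+B)/σ_{k-1}(A+B) ≤ σ_k(B)/σ_{k-1}(B). -/
/-- The `j`-th elementary symmetric polynomial of `lam : Fin n → ℝ`:
`σ_j(λ) = ∑_{1 ≤ i₁ < ⋯ < i_j ≤ n} λ_{i₁} ⋯ λ_{i_j}`, with `σ_0(λ) = 1`. -/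
noncomputable def esymmVec (n j : ℕ) (lam : Fin n → ℝ) : ℝ :=
  ∑ S ∈ Finset.univ.powersetCard j, ∏ i ∈ S, lam i

/-- Membership in the Gårding cone `Γ_m = {λ : σ_j(λ) > 0 for all 1 ≤ j ≤ m}`. -/
def inGamma (n m : ℕ) (lam : Fin n → ℝ) : Prop :=
  ∀ j : ℕ, 1 ≤ j → j ≤ m → 0 < esymmVec n j lam

/-!
Write `-A = ∑ᵢ vᵢ vᵢᵀ`, so that `B` is reached from `A + B` by adding rank-one positive
semidefinite matrices one at a time; it suffices to show that one such step `M ↦ M + v vᵀ` keeps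
`M` in `Γ_{k-1}` and does not decrease `σ_k / σ_{k-1}`.

If `M` has eigenvalues `λ` and `w` are the coordinates of `v` in an orthonormal eigenbasis of `M`,
the matrix determinant lemma applied to the characteristic polynomial gives
`σ_j(M + v vᵀ) = σ_j(λ) + ∑ᵢ wᵢ² σ_{j-1}(λ∖i)`, where `λ∖i` omits `λᵢ`. Together with
`σ_j(λ) = σ_j(λ∖i) + λᵢ σ_{j-1}(λ∖i)` this turns the cross difference
`σ_k(M + v vᵀ) σ_{k-1}(M) - σ_k(M) σ_{k-1}(M + v vᵀ)` into
`∑ᵢ wᵢ² (σ_{k-1}(λ∖i)² - σ_k(λ∖i) σ_{k-2}(λ∖i))`, which is nonnegative by Newton's inequality.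
Positivity is preserved because `λ ∈ Γ_m` implies `λ∖i ∈ Γ_{m-1}`, which follows by induction on
`m` from the same recursion and Newton's inequality.

Newton's inequality `σ_j σ_{j+2} ≤ σ_{j+1}²` holds for the coefficients of every real-rooted
polynomial: Hasse derivatives (Rolle) and reversal preserve real-rootedness and cut the polynomial
down to a quadratic whose discriminant is nonnegative.
-/

open Polynomial Finset

namespace Multiset

variable {R : Type*} [CommSemiring R]

theorem esymm_zero (s : Multiset R) : s.esymm 0 = 1 := by
  simp [esymm]

theorem esymm_eq_zero_of_card_lt {s : Multiset R} {j : ℕ} (h : card s < j) : s.esymm j = 0 := by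
  simp [esymm, powersetCard_eq_empty j h]

theorem esymm_cons_succ (a : R) (s : Multiset R) (j : ℕ) :
    (a ::ₘ s).esymm (j + 1) = s.esymm (j + 1) + a * s.esymm j := by
  simp [esymm, powersetCard_cons, sum_map_mul_left]

end Multiset

namespace Polynomial

theorem Splits.derivative_real {p : ℝ[X]} (hp : p.Splits) : (derivative p).Splits := by
  rw [splits_iff_card_roots] at hp ⊢
  have := card_roots_le_derivative p
  have := card_roots' (derivative p)
  have := natDegree_derivative_le p
  omega

theorem Splits.hasseDeriv_real {p : ℝ[X]} (hp : p.Splits) (k : ℕ) : (hasseDeriv k p).Splits := by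
  have hiter : (derivative^[k] p).Splits := by
    induction k with
    | zero => exact hp
    | succ k ih => rw [Function.iterate_succ_apply']; exact ih.derivative_real
  have hk : (k.factorial : ℝ) ≠ 0 := by positivity
  have : hasseDeriv k p = C (k.factorial : ℝ)⁻¹ * derivative^[k] p := by
    rw [← factorial_smul_hasseDeriv, LinearMap.smul_apply, nsmul_eq_mul, ← mul_assoc,
      ← C_eq_natCast, ← C_mul, inv_mul_cancel₀ hk, C_1, one_mul]
  rw [this]
  exact hiter.C_mul _

theorem Splits.reverse {K : Type*} [Field K] {p : K[X]} (hp : p.Splits) : p.reverse.Splits := by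
  rw [hp.eq_prod_roots, reverse_mul_of_domain, reverse_C]
  refine (Splits.C _).mul ?_
  induction p.roots using Multiset.induction_on with
  | empty => rw [Multiset.map_zero, Multiset.prod_zero, ← C_1, reverse_C]; exact Splits.C 1
  | cons a s ih =>
    rw [Multiset.map_cons, Multiset.prod_cons, reverse_mul_of_domain]
    exact (Splits.of_natDegree_le_one ((reverse_natDegree_le _).trans
      (natDegree_X_sub_C_le a))).mul ih

theorem Splits.four_mul_coeff_two_mul_coeff_zero_le {K : Type*} [Field K] [LinearOrder K]
    [IsStrictOrderedRing K] {p : K[X]} (hp : p.Splits) (hdeg : p.natDegree ≤ 2) :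
    4 * p.coeff 2 * p.coeff 0 ≤ p.coeff 1 ^ 2 := by
  rcases eq_or_ne (p.coeff 2) 0 with h2 | h2
  · rw [h2, mul_zero, zero_mul]
    positivity
  have hdeg2 : p.natDegree = 2 := le_antisymm hdeg (le_natDegree_of_ne_zero h2)
  obtain ⟨x, hx⟩ := hp.exists_eval_eq_zero
    (by rw [degree_eq_natDegree (by rintro rfl; simp at h2), hdeg2]; decide)
  rw [eval_eq_sum_range' (n := 3) (by omega)] at hx
  simp only [Finset.sum_range_succ, Finset.sum_range_zero, pow_zero, pow_one] at hx
  have hdisc : p.coeff 1 ^ 2 - 4 * p.coeff 2 * p.coeff 0 = (2 * p.coeff 2 * x + p.coeff 1) ^ 2 := by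
    linear_combination (-4 * p.coeff 2) * hx
  rw [← sub_nonneg, hdisc]
  positivity

theorem Splits.coeff_mul_coeff_le_sq {p : ℝ[X]} (hp : p.Splits) (i : ℕ) :
    p.coeff i * p.coeff (i + 2) ≤ p.coeff (i + 1) ^ 2 := by
  rcases lt_or_ge p.natDegree (i + 2) with h | h
  · rw [coeff_eq_zero_of_natDegree_lt h, mul_zero]
    positivity
  obtain ⟨e, he⟩ : ∃ e, p.natDegree = i + (e + 2) := ⟨p.natDegree - i - 2, by omega⟩
  set q := hasseDeriv i p
  have hqdeg : q.natDegree = e + 2 := by rw [natDegree_hasseDeriv, he]; omega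
  -- the coefficients of the quadratic `u` are those of `p` at `i + 2`, `i + 1`, `i`,
  -- up to binomial factors
  set u := hasseDeriv e q.reverse
  have hu : ∀ t ≤ 2, u.coeff t = (t + e).choose e * q.coeff (2 - t) := fun t ht => by
    rw [hasseDeriv_coeff, coeff_reverse, hqdeg, revAt_le (by omega)]
    congr 2
    omega
  have hudeg : u.natDegree ≤ 2 :=
    (natDegree_hasseDeriv_le _ _).trans (by have := reverse_natDegree_le q; omega)
  have key :=
    ((hp.hasseDeriv_real i).reverse.hasseDeriv_real e).four_mul_coeff_two_mul_coeff_zero_le hudeg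
  rw [hu 2 le_rfl, hu 1 (by omega), hu 0 (by omega)] at key
  simp only [q, hasseDeriv_coeff, Nat.sub_self, Nat.sub_zero, zero_add, Nat.choose_self,
    Nat.add_one_sub_one, Nat.cast_one, one_mul] at key
  have choose_one : ∀ k : ℕ, ((1 + k).choose k : ℝ) = k + 1 := fun k => by
    rw [Nat.add_comm, Nat.choose_succ_self_right]; push_cast; ring
  have choose_two : ∀ k : ℕ, ((2 + k).choose k : ℝ) = (k + 2) * (k + 1) / 2 := fun k => by
    rw [Nat.add_comm, Nat.choose_symm_add, Nat.cast_choose_two]; push_cast; ring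
  rw [choose_one, choose_one, choose_two, choose_two, Nat.add_comm 2 i, Nat.add_comm 1 i] at key
  have hpos : (0 : ℝ) < (e + 1) * (i + 1) := by positivity
  have hle : ((e : ℝ) + 1) * (i + 1) ≤ (e + 2) * (i + 2) := by gcongr <;> linarith
  have hscaled : ((e : ℝ) + 2) * (i + 2) * (p.coeff i * p.coeff (i + 2)) ≤
      (e + 1) * (i + 1) * p.coeff (i + 1) ^ 2 := by
    refine le_of_mul_le_mul_left ?_ hpos
    linear_combination key
  nlinarith [mul_le_mul_of_nonneg_right hle (sq_nonneg (p.coeff (i + 1)))]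

end Polynomial

namespace Multiset

theorem esymm_mul_esymm_le_sq (s : Multiset ℝ) (j : ℕ) :
    s.esymm j * s.esymm (j + 2) ≤ s.esymm (j + 1) ^ 2 := by
  rcases lt_or_ge (card s) (j + 2) with h | h
  · rw [esymm_eq_zero_of_card_lt h, mul_zero]
    positivity
  have hp : (s.map fun r => X + C r).prod.Splits :=
    Splits.multisetProd (by simp [Splits.X_add_C])
  have hcoeff : ∀ l ≤ j + 2, s.esymm l = (s.map fun r => X + C r).prod.coeff (card s - l) :=
    fun l hl => by rw [prod_X_add_C_coeff s (by omega), Nat.sub_sub_self (by omega)]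
  have := hp.coeff_mul_coeff_le_sq (card s - (j + 2))
  rw [mul_comm, hcoeff j (by omega), hcoeff (j + 1) (by omega), hcoeff (j + 2) le_rfl]
  convert this using 3 <;> omega

theorem esymm_pos_of_cons {a : ℝ} {s : Multiset ℝ} {m : ℕ}
    (h : ∀ j ≤ m + 1, 0 < (a ::ₘ s).esymm j) : ∀ j ≤ m, 0 < s.esymm j := by
  induction m with
  | zero =>
    intro j hj
    rw [Nat.le_zero.1 hj, esymm_zero]
    exact one_pos
  | succ m ih =>
    have hlow := ih fun j hj => h j (by omega)
    intro j hj
    rcases Nat.lt_or_eq_of_le hj with hj | rfl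
    · exact hlow j (by omega)
    have h1 := h (m + 1) (by omega)
    have h2 := h (m + 2) le_rfl
    rw [esymm_cons_succ] at h1 h2
    have ha := hlow m le_rfl
    have hnewton := s.esymm_mul_esymm_le_sq m
    by_contra! hb
    -- with `b = σ_{m+1}(s) ≤ 0`, Newton gives
    -- `0 < σ_m(s) σ_{m+2}(a ::ₘ s) ≤ b² + a σ_m(s) b = b σ_{m+1}(a ::ₘ s) ≤ 0`
    nlinarith [mul_pos ha h2]

end Multiset

section RankOneUpdate

variable {ι : Type*} [Fintype ι] {s : Multiset ℝ} {a c : ι → ℝ} {t : ι → Multiset ℝ}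

theorem esymm_add_sum_mul_esymm_pos (hs : ∀ i, s = a i ::ₘ t i) (hc : ∀ i, 0 ≤ c i) {m : ℕ}
    (hpos : ∀ j ≤ m + 1, 0 < s.esymm j) {j : ℕ} (hj : j ≤ m) :
    0 < s.esymm (j + 1) + ∑ i, c i * (t i).esymm j := by
  refine add_pos_of_pos_of_nonneg (hpos (j + 1) (by omega)) (sum_nonneg fun i _ => ?_)
  rw [hs i] at hpos
  exact mul_nonneg (hc i) (Multiset.esymm_pos_of_cons hpos j hj).le

theorem esymm_mul_add_sum_mul_esymm_le (hs : ∀ i, s = a i ::ₘ t i) (hc : ∀ i, 0 ≤ c i) (k : ℕ) :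
    s.esymm (k + 2) * (s.esymm (k + 1) + ∑ i, c i * (t i).esymm k) ≤
      (s.esymm (k + 2) + ∑ i, c i * (t i).esymm (k + 1)) * s.esymm (k + 1) := by
  have hdiff : (s.esymm (k + 2) + ∑ i, c i * (t i).esymm (k + 1)) * s.esymm (k + 1) -
        s.esymm (k + 2) * (s.esymm (k + 1) + ∑ i, c i * (t i).esymm k) =
      ∑ i, c i * ((t i).esymm (k + 1) * s.esymm (k + 1) - (t i).esymm k * s.esymm (k + 2)) := by
    simp only [mul_sub, sum_sub_distrib, ← mul_assoc, ← sum_mul]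
    ring
  rw [← sub_nonneg, hdiff]
  refine sum_nonneg fun i _ => mul_nonneg (hc i) ?_
  rw [hs i, Multiset.esymm_cons_succ, Multiset.esymm_cons_succ]
  nlinarith [(t i).esymm_mul_esymm_le_sq k]

end RankOneUpdate

theorem Finset.univ_val_map_eq_cons_erase {ι α : Type*} [Fintype ι] [DecidableEq ι] (f : ι → α)
    (i : ι) : univ.val.map f = f i ::ₘ (univ.erase i).val.map f := by
  rw [Finset.erase_val, ← Multiset.map_cons, Multiset.cons_erase (Finset.mem_univ i)]

theorem Finset.coeff_prod_X_sub_C {R σ : Type*} [CommRing R] (s : Finset σ) (f : σ → R) {j : ℕ}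
    (hj : j ≤ #s) :
    (∏ i ∈ s, (X - C (f i))).coeff (#s - j) = (-1) ^ j * (s.val.map f).esymm j := by
  have := Multiset.prod_X_sub_C_coeff (s.val.map f) (k := #s - j) (by simp)
  rwa [Multiset.map_map, Multiset.card_map, card_val, Nat.sub_sub_self hj] at this

namespace Matrix

theorem isHermitian_vecMulVec_self {ι : Type*} [Fintype ι] (v : ι → ℝ) :
    (vecMulVec v v).IsHermitian := by
  simpa using (posSemidef_vecMulVec_self_star v).isHermitian

variable {ι : Type*} [Fintype ι] [DecidableEq ι]

theorem det_diagonal_add_vecMulVec_of_field {K : Type*} [Field K] {d : ι → K} (hd : ∀ i, d i ≠ 0)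
    (u v : ι → K) :
    (diagonal d + vecMulVec u v).det = ∏ i, d i + ∑ i, u i * v i * ∏ j ∈ univ.erase i, d j := by
  have hfactor : diagonal d + vecMulVec u v =
      diagonal d * (1 + vecMulVec (fun i => (d i)⁻¹ * u i) v) := by
    rw [Matrix.mul_add, Matrix.mul_one, mul_vecMulVec]
    congr 2
    ext i
    rw [mulVec_diagonal, mul_inv_cancel_left₀ (hd i)]
  rw [hfactor, det_mul, det_diagonal, vecMulVec_eq Unit,
    det_one_add_replicateCol_mul_replicateRow, mul_add, mul_one, dotProduct, Finset.mul_sum]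
  congr 1
  refine sum_congr rfl fun i _ => ?_
  rw [← mul_prod_erase univ d (mem_univ i)]
  field_simp [hd i]

theorem det_diagonal_add_vecMulVec {R : Type*} [CommRing R] [IsDomain R] {d : ι → R}
    (hd : ∀ i, d i ≠ 0) (u v : ι → R) :
    (diagonal d + vecMulVec u v).det = ∏ i, d i + ∑ i, u i * v i * ∏ j ∈ univ.erase i, d j := by
  let f := algebraMap R (FractionRing R)
  have hf : Function.Injective f := IsFractionRing.injective R (FractionRing R)
  apply hf
  have hmap : f.mapMatrix (diagonal d + vecMulVec u v) =
      diagonal (fun i => f (d i)) + vecMulVec (fun i => f (u i)) (fun i => f (v i)) := by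
    ext i j
    by_cases h : i = j <;> simp [vecMulVec_apply, h]
  rw [RingHom.map_det, hmap,
    det_diagonal_add_vecMulVec_of_field fun i => (map_ne_zero_iff f hf).2 (hd i)]
  simp

theorem IsHermitian.charpoly_add_vecMulVec {M : Matrix ι ι ℝ} (hM : M.IsHermitian) (v : ι → ℝ) :
    (M + vecMulVec v v).charpoly = ∏ i, (X - C (hM.eigenvalues i)) -
      ∑ i, C (((star (hM.eigenvectorUnitary : Matrix ι ι ℝ)) *ᵥ v) i ^ 2) *
        ∏ j ∈ univ.erase i, (X - C (hM.eigenvalues j)) := by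
  set U : Matrix ι ι ℝ := (hM.eigenvectorUnitary : Matrix ι ι ℝ)
  set w := star U *ᵥ v
  have hconj : star U * (M + vecMulVec v v) * U = diagonal hM.eigenvalues + vecMulVec w w := by
    rw [Matrix.mul_add, Matrix.add_mul]
    congr 1
    · simpa [Unitary.conjStarAlgAut_apply] using hM.conjStarAlgAut_star_eigenvectorUnitary
    · rw [mul_vecMulVec, vecMulVec_mul]
      congr 1
      rw [show w = star U *ᵥ v from rfl, star_eq_conjTranspose,
        conjTranspose_eq_transpose_of_trivial, mulVec_transpose]
  have hinv : (M + vecMulVec v v).charpoly = (star U * (M + vecMulVec v v) * U).charpoly := by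
    rw [charpoly_mul_comm, ← Matrix.mul_assoc,
      Matrix.mem_unitaryGroup_iff.mp hM.eigenvectorUnitary.2, Matrix.one_mul]
  have hchar : charmatrix (diagonal hM.eigenvalues + vecMulVec w w) =
      diagonal (fun i => X - C (hM.eigenvalues i)) +
        vecMulVec (fun i => -C (w i)) (fun i => C (w i)) := by
    refine Matrix.ext fun i j => ?_
    by_cases h : i = j <;> simp [vecMulVec_apply, h]; ring
  rw [hinv, hconj, charpoly, hchar, det_diagonal_add_vecMulVec fun i => X_sub_C_ne_zero _]
  simp [sub_eq_add_neg, pow_two]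

theorem IsHermitian.esymm_eigenvalues_add_vecMulVec {M : Matrix ι ι ℝ} (hM : M.IsHermitian)
    (v : ι → ℝ) (hMv : (M + vecMulVec v v).IsHermitian) (j : ℕ) :
    (univ.val.map hMv.eigenvalues).esymm (j + 1) = (univ.val.map hM.eigenvalues).esymm (j + 1) +
      ∑ i, ((star (hM.eigenvectorUnitary : Matrix ι ι ℝ)) *ᵥ v) i ^ 2 *
        ((univ.erase i).val.map hM.eigenvalues).esymm j := by
  rcases lt_or_ge j (Fintype.card ι) with hj | hj
  · have h := congrArg (coeff · (#(univ : Finset ι) - (j + 1)))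
      (hMv.charpoly_eq.symm.trans (hM.charpoly_add_vecMulVec v))
    simp only [coeff_sub, finsetSum_coeff, coeff_C_mul] at h
    rw [coeff_prod_X_sub_C _ _ (by simpa using hj), coeff_prod_X_sub_C _ _ (by simpa using hj)] at h
    have herase : ∀ i, (∏ k ∈ univ.erase i, (X - C (hM.eigenvalues k))).coeff
        (#(univ : Finset ι) - (j + 1)) =
          (-1) ^ j * ((univ.erase i).val.map hM.eigenvalues).esymm j := fun i => by
      rw [← coeff_prod_X_sub_C _ _ (by rw [card_erase_of_mem (mem_univ i)]; simp; omega),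
        card_erase_of_mem (mem_univ i)]
      congr 1
      omega
    simp only [herase, RCLike.ofReal_real_eq_id, id_eq, ← mul_sum, mul_left_comm _ ((-1 : ℝ) ^ j),
      pow_succ (-1 : ℝ) j] at h
    refine mul_left_cancel₀ (pow_ne_zero j (neg_ne_zero.2 one_ne_zero)) ?_
    linear_combination -h
  · have hzero : ∀ (f : ι → ℝ) (s : Finset ι) (l : ℕ), #s < l → (s.val.map f).esymm l = 0 :=
      fun f s l h => Multiset.esymm_eq_zero_of_card_lt (by simpa using h)
    rw [hzero _ _ _ (by simp; omega), hzero _ _ _ (by simp; omega), zero_add]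
    refine (sum_eq_zero fun i _ => ?_).symm
    have := Fintype.card_pos_iff.2 ⟨i⟩
    rw [hzero _ _ _ (by rw [card_erase_of_mem (mem_univ i), card_univ]; omega), mul_zero]

theorem IsHermitian.esymm_eigenvalues_add_vecMulVec_pos {M : Matrix ι ι ℝ} (hM : M.IsHermitian)
    {v : ι → ℝ} (hMv : (M + vecMulVec v v).IsHermitian) {k : ℕ}
    (hpos : ∀ j ≤ k + 1, 0 < (univ.val.map hM.eigenvalues).esymm j) :
    ∀ j ≤ k + 1, 0 < (univ.val.map hMv.eigenvalues).esymm j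
  | 0, _ => by simp [Multiset.esymm_zero]
  | j + 1, hj => by
    rw [hM.esymm_eigenvalues_add_vecMulVec v hMv]
    exact esymm_add_sum_mul_esymm_pos (univ_val_map_eq_cons_erase _) (fun _ => sq_nonneg _) hpos
      (by omega)

theorem IsHermitian.esymm_div_esymm_le_add_vecMulVec {M : Matrix ι ι ℝ} (hM : M.IsHermitian)
    {v : ι → ℝ} (hMv : (M + vecMulVec v v).IsHermitian) {k : ℕ}
    (hpos : ∀ j ≤ k + 1, 0 < (univ.val.map hM.eigenvalues).esymm j) :
    (univ.val.map hM.eigenvalues).esymm (k + 2) / (univ.val.map hM.eigenvalues).esymm (k + 1) ≤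
      (univ.val.map hMv.eigenvalues).esymm (k + 2) /
        (univ.val.map hMv.eigenvalues).esymm (k + 1) := by
  rw [div_le_div_iff₀ (hpos (k + 1) le_rfl)
    (hM.esymm_eigenvalues_add_vecMulVec_pos hMv hpos (k + 1) le_rfl),
    hM.esymm_eigenvalues_add_vecMulVec v hMv, hM.esymm_eigenvalues_add_vecMulVec v hMv]
  exact esymm_mul_add_sum_mul_esymm_le (univ_val_map_eq_cons_erase _) (fun _ => sq_nonneg _) k

theorem IsHermitian.esymm_div_esymm_le_add_sum_vecMulVec {κ : Type*} (s : Finset κ)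
    (v : κ → ι → ℝ) {k : ℕ} {M N : Matrix ι ι ℝ} (hM : M.IsHermitian) (hN : N.IsHermitian)
    (hMN : N = M + ∑ i ∈ s, vecMulVec (v i) (v i))
    (hpos : ∀ j ≤ k + 1, 0 < (univ.val.map hM.eigenvalues).esymm j) :
    (univ.val.map hM.eigenvalues).esymm (k + 2) / (univ.val.map hM.eigenvalues).esymm (k + 1) ≤
      (univ.val.map hN.eigenvalues).esymm (k + 2) /
        (univ.val.map hN.eigenvalues).esymm (k + 1) := by
  classical
  induction s using Finset.induction_on generalizing M with
  | empty =>
    rw [sum_empty, add_zero] at hMN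
    subst hMN
    exact le_rfl
  | insert a s ha ih =>
    have hMa := hM.add (isHermitian_vecMulVec_self (v a))
    refine (hM.esymm_div_esymm_le_add_vecMulVec hMa hpos).trans (ih hMa ?_ ?_)
    · rw [hMN, sum_insert ha, add_assoc]
    · exact hM.esymm_eigenvalues_add_vecMulVec_pos hMa hpos

end Matrix

theorem esymmVec_eq_esymm (n j : ℕ) (lam : Fin n → ℝ) :
    esymmVec n j lam = (univ.val.map lam).esymm j :=
  (esymm_map_val lam univ j).symm

theorem inGamma.esymm_pos {n m : ℕ} {lam : Fin n → ℝ} (h : inGamma n m lam) :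
    ∀ j ≤ m, 0 < (univ.val.map lam).esymm j
  | 0, _ => by simp [Multiset.esymm_zero]
  | j + 1, hj => by rw [← esymmVec_eq_esymm]; exact h (j + 1) (by omega) hj

theorem stmt_2_general (n k : ℕ) (hk2 : 2 ≤ k)
    (A B : Matrix (Fin n) (Fin n) ℝ) (hA : A.IsHermitian) (hB : B.IsHermitian)
    (hAnsd : (-A).PosSemidef)
    (hABG : inGamma n (k - 1) (hA.add hB).eigenvalues) :
    esymmVec n k (hA.add hB).eigenvalues / esymmVec n (k - 1) (hA.add hB).eigenvalues ≤
      esymmVec n k hB.eigenvalues / esymmVec n (k - 1) hB.eigenvalues := by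
  obtain ⟨k, rfl⟩ : ∃ k', k = k' + 2 := ⟨k - 2, by omega⟩
  obtain ⟨m, v, hv⟩ := Matrix.posSemidef_iff_eq_sum_vecMulVec.mp hAnsd
  simp only [star_trivial] at hv
  simp only [esymmVec_eq_esymm] at hABG ⊢
  refine (hA.add hB).esymm_div_esymm_le_add_sum_vecMulVec univ v hB ?_ hABG.esymm_pos
  rw [← hv]
  abel

/-- Lemma (A+B), part (2), first inequality: if `A` is negative semidefinite,
`B ∈ Γ_{k-1}` and `A + B ∈ Γ_{k-1}`, then
`σ_k(A+B)/σ_{k-1}(A+B) ≤ σ_k(B)/σ_{k-1}(B)`. -/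
theorem stmt_2 (n k : ℕ) (hn : 2 ≤ n) (hk2 : 2 ≤ k) (hkn : k ≤ n)
    (A B : Matrix (Fin n) (Fin n) ℝ) (hA : A.IsHermitian) (hB : B.IsHermitian)
    (hAnsd : (-A).PosSemidef)
    (hBG : inGamma n (k - 1) hB.eigenvalues)
    (hABG : inGamma n (k - 1) (hA.add hB).eigenvalues) :
    esymmVec n k (hA.add hB).eigenvalues / esymmVec n (k - 1) (hA.add hB).eigenvalues ≤
      esymmVec n k hB.eigenvalues / esymmVec n (k - 1) hB.eigenvalues :=
  stmt_2_general n k hk2 A B hA hB hAnsd hABG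
end

section
/- Let n ≥ 3 and 3 ≤ k ≤ n. For λ ∈ Γ_{k-1}, Σ_{i=1}^{n} ∂(σ_k/σ_{k-1})/∂λ_i (λ) ≥ (n−k+1)/k, where σ_k/σ_{k-1} denotes the function λ ↦ σ_k(λ)/σ_{k-1}(λ) on Γ_{k-1}. -/
open Polynomial Finset

namespace Polynomial

theorem Splits.derivative {p : ℝ[X]} (hp : p.Splits) : p.derivative.Splits := by
  rw [splits_iff_card_roots] at hp ⊢
  have := card_roots_le_derivative p
  have := natDegree_derivative_le p
  have := card_roots' p.derivative
  omega

theorem Splits.iterate_derivative {p : ℝ[X]} (hp : p.Splits) (k : ℕ) :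
    (Polynomial.derivative^[k] p).Splits :=
  Function.Iterate.rec _ hp (fun _ => Splits.derivative) k

theorem Splits.discrim_coeff_nonneg {K : Type*} [Field K] [LinearOrder K] [IsStrictOrderedRing K]
    {q : K[X]} (hq : q.Splits) (hdeg : q.natDegree ≤ 2) :
    0 ≤ discrim (q.coeff 2) (q.coeff 1) (q.coeff 0) := by
  by_cases hq0 : q.degree = 0
  · have hq0 : q.natDegree = 0 := natDegree_eq_of_degree_eq_some hq0
    simp [discrim, coeff_eq_zero_of_natDegree_lt, hq0]
  obtain ⟨x, hx⟩ := hq.exists_eval_eq_zero hq0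
  rw [eval_eq_sum_range' (n := 3) (by omega)] at hx
  rw [discrim_eq_sq_of_quadratic_eq_zero (x := x)
    (by simp [Finset.sum_range_succ] at hx; linear_combination hx)]
  exact sq_nonneg _

theorem coeff_iterate_derivative_reverse_iterate_derivative {K : Type*} [Field K] [CharZero K]
    {p : K[X]} {a b : ℕ} (hdeg : p.natDegree = a + b + 2) {i : ℕ} (hi : i ≤ 2) :
    (Polynomial.derivative^[b] (Polynomial.derivative^[a] p).reverse).coeff i =
      (i + b).descFactorial b * ((2 - i + a).descFactorial a * p.coeff (a + (2 - i))) := by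
  set f := Polynomial.derivative^[a] p
  have hf_coeff (j : ℕ) : f.coeff j = (j + a).descFactorial a * p.coeff (a + j) := by
    simp [f, coeff_iterate_derivative, add_comm]
  have hf_deg : f.natDegree = b + 2 := by
    refine le_antisymm ((natDegree_iterate_derivative p a).trans (by omega))
      (le_natDegree_of_ne_zero ?_)
    have hp0 : p ≠ 0 := ne_zero_of_natDegree_gt (n := 0) (by omega)
    rw [hf_coeff, show a + (b + 2) = p.natDegree by omega]
    exact mul_ne_zero (by exact_mod_cast (Nat.descFactorial_pos.mpr (by omega)).ne')
      (leadingCoeff_ne_zero.mpr hp0)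
  rw [coeff_iterate_derivative, coeff_reverse, hf_deg, revAt_le (by omega), nsmul_eq_mul,
    show b + 2 - (i + b) = 2 - i by omega, hf_coeff]

theorem Splits.newton_coeff {p : ℝ[X]} (hp : p.Splits) {a b : ℕ}
    (hdeg : p.natDegree = a + b + 2) :
    ((a : ℝ) + 2) * (b + 2) * (p.coeff a * p.coeff (a + 2)) ≤
      ((a : ℝ) + 1) * (b + 1) * p.coeff (a + 1) ^ 2 := by
  have hq_deg :
      (Polynomial.derivative^[b] (Polynomial.derivative^[a] p).reverse).natDegree ≤ 2 := by
    have := (reverse_natDegree_le _).trans (natDegree_iterate_derivative p a)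
    exact (natDegree_iterate_derivative _ b).trans (by omega)
  have hdisc :=
    ((hp.iterate_derivative a).reverse.iterate_derivative b).discrim_coeff_nonneg hq_deg
  rw [discrim, coeff_iterate_derivative_reverse_iterate_derivative hdeg le_rfl,
    coeff_iterate_derivative_reverse_iterate_derivative hdeg (by norm_num),
    coeff_iterate_derivative_reverse_iterate_derivative hdeg (by norm_num)] at hdisc
  have hdf (i k : ℕ) : (i.factorial : ℝ) * (i + k).descFactorial k = (i + k).factorial := by
    rw [Nat.add_descFactorial_eq_ascFactorial]
    exact_mod_cast Nat.factorial_mul_ascFactorial i k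
  have hdf0 (k : ℕ) : ((0 + k).descFactorial k : ℝ) = k.factorial := by
    simpa using hdf 0 k
  have hdf1 (k : ℕ) : ((1 + k).descFactorial k : ℝ) = (k + 1) * k.factorial := by
    have := hdf 1 k
    rw [add_comm 1 k] at this ⊢
    simpa [Nat.factorial_succ] using this
  have hdf2 (k : ℕ) : ((2 + k).descFactorial k : ℝ) = (k + 2) * (k + 1) * k.factorial / 2 := by
    have := hdf 2 k
    rw [add_comm 2 k] at this ⊢
    simp [Nat.factorial_succ] at this
    linarith
  simp only [Nat.sub_self, Nat.sub_zero, show 2 - 1 = 1 from rfl, hdf0, hdf1, hdf2,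
    add_zero] at hdisc
  have hpos : (0 : ℝ) < (a + 1) * (b + 1) * (a.factorial * b.factorial) ^ 2 := by positivity
  refine le_of_mul_le_mul_left ?_ hpos
  linear_combination hdisc

end Polynomial

theorem Finset.sum_powersetCard_succ_sum_prod_erase {ι R : Type*} [DecidableEq ι]
    [CommSemiring R] (s : Finset ι) (j : ℕ) (f : ι → R) :
    ∑ S ∈ s.powersetCard (j + 1), ∑ i ∈ S, ∏ l ∈ S.erase i, f l =
      (#s - j) • ∑ T ∈ s.powersetCard j, ∏ l ∈ T, f l := by
  have hcompl (T) (hT : T ∈ s.powersetCard j) :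
      (#s - j) • ∏ l ∈ T, f l = ∑ _i ∈ s \ T, ∏ l ∈ T, f l := by
    rw [mem_powersetCard] at hT
    rw [sum_const, card_sdiff_of_subset hT.1, hT.2]
  rw [smul_sum, sum_congr rfl hcompl, sum_sigma', sum_sigma']
  refine sum_nbij' (fun x => ⟨x.1.erase x.2, x.2⟩) (fun x => ⟨insert x.2 x.1, x.2⟩)
    ?_ ?_ ?_ ?_ fun _ _ => rfl
  · rintro ⟨S, i⟩ hSi
    simp only [mem_sigma, mem_powersetCard] at hSi ⊢
    obtain ⟨⟨hSs, hScard⟩, hi⟩ := hSi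
    refine ⟨⟨(erase_subset i S).trans hSs, by rw [card_erase_of_mem hi, hScard]; rfl⟩, ?_⟩
    simp [hSs hi]
  · rintro ⟨T, i⟩ hTi
    simp only [mem_sigma, mem_powersetCard, mem_sdiff] at hTi ⊢
    obtain ⟨⟨hTs, hTcard⟩, his, hiT⟩ := hTi
    exact ⟨⟨insert_subset his hTs, by rw [card_insert_of_notMem hiT, hTcard]⟩,
      mem_insert_self i T⟩
  · rintro ⟨S, i⟩ hSi
    simp only [mem_sigma] at hSi
    simp [insert_erase hSi.2]
  · rintro ⟨T, i⟩ hTi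
    simp only [mem_sigma, mem_sdiff] at hTi
    simp [erase_insert hTi.2.2]

theorem HasLineDerivAt.fun_div {𝕜 E : Type*} [NontriviallyNormedField 𝕜] [AddCommGroup E]
    [Module 𝕜 E] {f g : E → 𝕜} {f' g' : 𝕜} {x v : E} (hf : HasLineDerivAt 𝕜 f f' x v)
    (hg : HasLineDerivAt 𝕜 g g' x v) (hx : g x ≠ 0) :
    HasLineDerivAt 𝕜 (fun y => f y / g y) ((f' * g x - f x * g') / g x ^ 2) x v := by
  simpa [HasLineDerivAt] using HasDerivAt.fun_div hf hg (by simpa using hx)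

theorem esymmVec_eq_coeff_prod_X_add_C (n j : ℕ) (hj : j ≤ n) (lam : Fin n → ℝ) :
    esymmVec n j lam = (∏ i, (X + C (lam i))).coeff (n - j) := by
  rw [prod_X_add_C_coeff _ _ (by simp)]
  simp [esymmVec, Nat.sub_sub_self hj]

theorem esymmVec_newton (n m : ℕ) (hmn : m + 2 ≤ n) (lam : Fin n → ℝ) :
    ((m : ℝ) + 2) * (n - m) * (esymmVec n m lam * esymmVec n (m + 2) lam) ≤
      ((m : ℝ) + 1) * (n - m - 1) * esymmVec n (m + 1) lam ^ 2 := by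
  obtain ⟨a, rfl⟩ : ∃ a, n = a + m + 2 := ⟨n - (m + 2), by omega⟩
  have hdeg : (∏ i : Fin (a + m + 2), (X + C (lam i))).natDegree = a + m + 2 := by
    simp [natDegree_prod_of_monic _ _ fun i _ => monic_X_add_C (lam i)]
  have h := (Splits.prod fun i _ => Splits.X_add_C (lam i)).newton_coeff hdeg
  rw [esymmVec_eq_coeff_prod_X_add_C _ m (by omega),
    esymmVec_eq_coeff_prod_X_add_C _ (m + 1) (by omega),
    esymmVec_eq_coeff_prod_X_add_C _ (m + 2) (by omega), show a + m + 2 - m = a + 2 by omega,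
    show a + m + 2 - (m + 1) = a + 1 by omega, show a + m + 2 - (m + 2) = a by omega]
  push_cast
  linarith

theorem hasFDerivAt_esymmVec (n j : ℕ) (lam : Fin n → ℝ) :
    HasFDerivAt (esymmVec n j)
      (∑ S ∈ univ.powersetCard j, ∑ i ∈ S, (∏ l ∈ S.erase i, lam l) •
        ContinuousLinearMap.proj (R := ℝ) (φ := fun _ : Fin n => ℝ) i) lam :=
  HasFDerivAt.fun_sum fun _ _ => HasFDerivAt.finsetProd fun i _ => hasFDerivAt_apply i lam

theorem hasLineDerivAt_esymmVec_one (n j : ℕ) (lam : Fin n → ℝ) :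
    HasLineDerivAt ℝ (esymmVec n (j + 1)) ((n - j : ℕ) * esymmVec n j lam) lam 1 := by
  refine HasDerivAt.congr_deriv ((hasFDerivAt_esymmVec n (j + 1) lam).hasLineDerivAt 1) ?_
  simp [esymmVec, sum_powersetCard_succ_sum_prod_erase, nsmul_eq_mul]

theorem stmt_12_general (n k : ℕ) (hk3 : 3 ≤ k) (hkn : k ≤ n)
    (lam : Fin n → ℝ) (hG : inGamma n (k - 1) lam) :
    ∑ i : Fin n,
        fderiv ℝ (fun x : Fin n → ℝ => esymmVec n k x / esymmVec n (k - 1) x)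
          lam (Pi.single i 1) ≥
      ((n : ℝ) - k + 1) / k := by
  obtain ⟨m, rfl⟩ : ∃ m, k = m + 2 := ⟨k - 2, by omega⟩
  have hσ : 0 < esymmVec n (m + 1) lam := hG (m + 1) (by omega) le_rfl
  have hquot : HasLineDerivAt ℝ (fun x => esymmVec n (m + 2) x / esymmVec n (m + 1) x)
      (((n - (m + 1) : ℕ) * esymmVec n (m + 1) lam * esymmVec n (m + 1) lam -
        esymmVec n (m + 2) lam * ((n - m : ℕ) * esymmVec n m lam)) / esymmVec n (m + 1) lam ^ 2)
      lam 1 :=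
    (hasLineDerivAt_esymmVec_one n (m + 1) lam).fun_div
      (hasLineDerivAt_esymmVec_one n m lam) hσ.ne'
  have hdiff : DifferentiableAt ℝ (fun x => esymmVec n (m + 2) x / esymmVec n (m + 1) x) lam := by
    simp only [div_eq_mul_inv]
    exact (hasFDerivAt_esymmVec n _ lam).differentiableAt.fun_mul
      ((hasFDerivAt_esymmVec n _ lam).differentiableAt.fun_inv hσ.ne')
  have hones : ∑ i : Fin n, Pi.single i (1 : ℝ) = 1 := by
    simpa using Finset.univ_sum_single (1 : Fin n → ℝ)
  rw [show m + 2 - 1 = m + 1 from rfl, ← map_sum, hones, ← hdiff.lineDeriv_eq_fderiv,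
    hquot.lineDeriv, ge_iff_le, div_le_div_iff₀ (by positivity) (by positivity)]
  push_cast [Nat.cast_sub (show m + 1 ≤ n by omega), Nat.cast_sub (show m ≤ n by omega)]
  linear_combination esymmVec_newton n m hkn lam

/-- For `λ ∈ Γ_{k-1}`, `∑_i ∂(σ_k/σ_{k-1})/∂λ_i(λ) ≥ (n-k+1)/k`. -/
theorem stmt_12 (n k : ℕ) (hn : 3 ≤ n) (hk3 : 3 ≤ k) (hkn : k ≤ n)
    (lam : Fin n → ℝ) (hG : inGamma n (k - 1) lam) :
    ∑ i : Fin n,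
        fderiv ℝ (fun x : Fin n → ℝ => esymmVec n k x / esymmVec n (k - 1) x)
          lam (Pi.single i 1) ≥
      ((n : ℝ) - k + 1) / k :=
  stmt_12_general n k hk3 hkn lam hG
end
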